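/- For every edge set E ⊆ (V choose 2), [Γ^{Ā}]_E ≤ ᾱ^{v−c(E)}, with equality whenever the graph (V,E) is a forest (contains no cycle). -/

import Mathlib

open scoped Classical

noncomputable section

/-- Number of connected components of the graph on `V` with edge set `E`. -/
def cComp (V : Type) [Fintype V] (E : Finset (Sym2 V)) : ℕ :=
  Nat.card (SimpleGraph.fromEdgeSet (E : Set (Sym2 V))).ConnectedComponent

/-- `E` is isthmus-free: it contains no edge whose removal increases the number
of connected components. -/
def IsthmusFree (V : Type) [Fintype V] (E : Finset (Sym2 V)) : Prop :=
  ∀ t ∈ E, ¬ cComp V (E.erase t) > cComp V E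

/-- Möbius function of the poset `P_V` of isthmus-free edge sets on `V`,
ordered by inclusion: `μ(K,K) = 1` and `∑_{L ∈ P_V, K ⊆ L ⊆ H} μ(K,L) = 0` for `K ⊊ H`. -/
def muPV (V : Type) [Fintype V] (K H : Finset (Sym2 V)) : ℤ :=
  if K = H then 1
  else - ∑ L ∈ ((H.powerset.filter (fun L => K ⊆ L ∧ L ≠ H ∧ IsthmusFree V L)).attach),
      muPV V K L.1
termination_by H.card
decreasing_by
  have hL := L.2
  simp only [Finset.mem_filter, Finset.mem_powerset] at hL
  exact Finset.card_lt_card (lt_of_le_of_ne hL.1 hL.2.2.1)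

/-- `[Γ^A]_E`: the probability that a uniformly random coloring `X : V → F` has all
differences along edges of `E` inside `A`. -/
def Gamma (V : Type) [Fintype V] (F : Type) [Fintype F] [AddCommGroup F]
    (A : Finset F) (E : Finset (Sym2 V)) : ℝ :=
  (Nat.card {X : V → F //
      ∀ e ∈ E, ∀ u w : V, e = s(u, w) → X u - X w ∈ A} : ℝ) /
    (Fintype.card F : ℝ) ^ (Fintype.card V)

end

/-!
Add the edges of `E` one at a time. An edge joining two vertices that are already connected
leaves the components unchanged and can only lower the density. An edge `uw` joining two
components lowers `c` by one and multiplies the density by exactly `|B|/f`: adding a constant `t`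
on the whole component of `w` preserves all old constraints and shifts `X w - X u` by `t`, so
this difference is equidistributed over `F`.
-/

open Finset SimpleGraph

theorem Finset.card_filter_mem_eq_card_mul {α F : Type*} [AddGroup F] (S : Finset α)
    (φ : α → F) (τ : F → α → α) (hS : ∀ t, ∀ x ∈ S, τ t x ∈ S)
    (hφ : ∀ t x, φ (τ t x) = φ x + t) (hτ : ∀ t x, τ (-t) (τ t x) = x) (B : Finset F) :
    #{x ∈ S | φ x ∈ B} = #B * #{x ∈ S | φ x = 0} := by
  rw [card_eq_sum_card_fiberwise (s := {x ∈ S | φ x ∈ B}) (t := B) fun x hx => (mem_filter.1 hx).2,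
    ← smul_eq_mul, ← sum_const]
  refine sum_congr rfl fun t ht => ?_
  rw [filter_filter]
  refine card_nbij' (τ (-t)) (τ t) (fun x hx => ?_) (fun x hx => ?_)
    (fun x _ => by simpa using hτ (-t) x) (fun x _ => hτ t x)
  · simp_all
  · simp_all

namespace SimpleGraph

variable {V : Type*} {G : SimpleGraph V} {u v x y : V}

theorem reachable_sup_edge_iff :
    (G ⊔ edge u v).Reachable x y ↔
      G.Reachable x y ∨ G.Reachable x u ∧ G.Reachable v y ∨ G.Reachable x v ∧ G.Reachable u y := by
  refine ⟨?_, ?_⟩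
  · rintro ⟨p⟩
    induction p with
    | nil => exact .inl .rfl
    | cons h _ ih =>
      rw [sup_adj, edge_adj] at h
      rcases h with h | ⟨⟨rfl, rfl⟩ | ⟨rfl, rfl⟩, -⟩ <;>
        rcases ih with h' | ⟨h₁, h₂⟩ | ⟨h₁, h₂⟩
      exacts [.inl (h.reachable.trans h'), .inr (.inl ⟨h.reachable.trans h₁, h₂⟩),
        .inr (.inr ⟨h.reachable.trans h₁, h₂⟩), .inr (.inl ⟨.rfl, h'⟩), .inl (h₁.symm.trans h₂),
        .inl h₂, .inr (.inr ⟨.rfl, h'⟩), .inl h₂, .inl (h₁.symm.trans h₂)]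
  · have huv : (G ⊔ edge u v).Reachable u v := by
      obtain rfl | h := eq_or_ne u v
      · rfl
      · exact Adj.reachable (by simp [edge_adj, h])
    have hle : G ≤ G ⊔ edge u v := le_sup_left
    rintro (h | ⟨h₁, h₂⟩ | ⟨h₁, h₂⟩)
    · exact h.mono hle
    · exact (h₁.mono hle).trans (huv.trans (h₂.mono hle))
    · exact (h₁.mono hle).trans (huv.symm.trans (h₂.mono hle))

theorem card_connectedComponent_sup_edge_of_reachable (h : G.Reachable u v) :
    Nat.card (G ⊔ edge u v).ConnectedComponent = Nat.card G.ConnectedComponent :=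
  Nat.card_congr <| Quot.congrRight fun x y => by
    rw [reachable_sup_edge_iff]
    refine ⟨?_, .inl⟩
    rintro (h' | ⟨h₁, h₂⟩ | ⟨h₁, h₂⟩)
    exacts [h', h₁.trans (h.trans h₂), h₁.trans (h.symm.trans h₂)]

theorem card_connectedComponent_sup_edge_add_one [Finite V] (h : ¬G.Reachable u v) :
    Nat.card (G ⊔ edge u v).ConnectedComponent + 1 = Nat.card G.ConnectedComponent := by
  -- The new edge merges exactly the components of `u` and `v`.
  let φ : {c : G.ConnectedComponent // c ≠ G.connectedComponentMk v} →
      (G ⊔ edge u v).ConnectedComponent := fun c => c.1.map (Hom.ofLE le_sup_left)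
  have hφ : φ.Bijective := by
    constructor
    · rintro ⟨c, hc⟩ ⟨c', hc'⟩ hcc'
      induction c using ConnectedComponent.ind
      induction c' using ConnectedComponent.ind
      simp only [φ, ConnectedComponent.map_mk, Hom.coe_ofLE, id, ConnectedComponent.eq,
        reachable_sup_edge_iff, ne_eq] at hcc' hc hc' ⊢
      rcases hcc' with h' | ⟨-, h₂⟩ | ⟨h₁, -⟩
      exacts [Subtype.ext (ConnectedComponent.sound h'), absurd h₂.symm hc', absurd h₁ hc]
    · intro c
      induction c using ConnectedComponent.ind with | h x => ?_
      by_cases hx : G.Reachable x v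
      · refine ⟨⟨G.connectedComponentMk u, by simpa [ConnectedComponent.eq] using h⟩, ?_⟩
        simp only [φ, ConnectedComponent.map_mk, Hom.coe_ofLE, id, ConnectedComponent.eq,
          reachable_sup_edge_iff]
        exact .inr (.inl ⟨.rfl, hx.symm⟩)
      · exact ⟨⟨G.connectedComponentMk x, by simpa [ConnectedComponent.eq] using hx⟩, rfl⟩
  rw [← Nat.card_eq_of_bijective φ hφ, ← Finite.card_option,
    Nat.card_congr (Equiv.optionSubtypeNe _)]

theorem fromEdgeSet_insert {s : Set (Sym2 V)} :
    fromEdgeSet (insert s(u, v) s) = fromEdgeSet s ⊔ edge u v := by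
  rw [Set.insert_eq, fromEdgeSet_union, sup_comm, edge]

end SimpleGraph

section Colorings

variable {V F : Type} [Fintype V] [Fintype F] [AddCommGroup F] {B : Finset F}
  {E E' : Finset (Sym2 V)} {u w : V}

noncomputable def colorings (B : Finset F) (E : Finset (Sym2 V)) : Finset (V → F) :=
  {X | ∀ u w, s(u, w) ∈ E → X u - X w ∈ B}

theorem Gamma_eq_card_colorings :
    Gamma V F B E = #(colorings B E) / (Fintype.card F : ℝ) ^ Fintype.card V := by
  rw [Gamma, Nat.card_eq_fintype_card, Fintype.card_subtype, colorings]
  congr 4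
  ext X
  exact ⟨fun h u w he => h _ he u w rfl, fun h e he u w hew => h u w (hew ▸ he)⟩

theorem Gamma_empty : Gamma V F B ∅ = 1 := by
  rw [Gamma_eq_card_colorings, colorings, filter_true_of_mem (by simp), card_univ,
    Fintype.card_fun]
  push_cast
  exact div_self (pow_ne_zero _ (Nat.cast_ne_zero.2 Fintype.card_ne_zero))

theorem Gamma_anti (h : E' ⊆ E) : Gamma V F B E ≤ Gamma V F B E' := by
  simp only [Gamma_eq_card_colorings]
  gcongr
  intro X
  simp only [colorings, mem_filter, mem_univ, true_and]
  exact fun hX u w he => hX u w (h he)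

theorem add_indicator_mem_colorings {X : V → F} (hX : X ∈ colorings B E) {C : Set V}
    (hC : ∀ a b, s(a, b) ∈ E → (a ∈ C ↔ b ∈ C)) (t : F) :
    X + C.indicator (fun _ => t) ∈ colorings B E := by
  simp only [colorings, mem_filter, mem_univ, true_and] at hX ⊢
  intro a b he
  simp only [Pi.add_apply, Set.indicator_apply, hC a b he]
  split_ifs
  · simpa using hX a b he
  · simpa using hX a b he

theorem colorings_insert (hB : ∀ a ∈ B, -a ∈ B) :
    colorings B (insert s(u, w) E) = {X ∈ colorings B E | X w - X u ∈ B} := by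
  have hB' : ∀ a, -a ∈ B ↔ a ∈ B := fun a => ⟨fun h => by simpa using hB _ h, hB a⟩
  ext X
  simp only [colorings, mem_filter, mem_univ, true_and, mem_insert, Sym2.eq_iff]
  constructor
  · intro h
    exact ⟨fun a b he => h a b (.inr he), h w u (.inl (.inr ⟨rfl, rfl⟩))⟩
  · rintro ⟨h, huw⟩ a b ((⟨rfl, rfl⟩ | ⟨rfl, rfl⟩) | he)
    · rwa [← neg_sub, hB']
    · exact huw
    · exact h a b he

theorem card_colorings_insert_mul (hB : ∀ a ∈ B, -a ∈ B)
    (h : ¬(fromEdgeSet (E : Set (Sym2 V))).Reachable u w) :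
    #(colorings B (insert s(u, w) E)) * Fintype.card F = #B * #(colorings B E) := by
  set C := {x | (fromEdgeSet (E : Set (Sym2 V))).Reachable w x}
  have hC : ∀ a b, s(a, b) ∈ E → (a ∈ C ↔ b ∈ C) := by
    intro a b he
    obtain rfl | hab := eq_or_ne a b
    · rfl
    · have hadj : (fromEdgeSet (E : Set (Sym2 V))).Adj a b :=
        (fromEdgeSet_adj _).2 ⟨he, hab⟩
      exact ⟨fun ha => ha.trans hadj.reachable, fun hb => hb.trans hadj.reachable.symm⟩
  have hu : u ∉ C := fun hu => h hu.symm
  have hw : w ∈ C := Reachable.refl w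
  have key := card_filter_mem_eq_card_mul (colorings B E) (fun X => X w - X u)
    (fun t X => X + C.indicator (fun _ => t))
    (fun t X hX => add_indicator_mem_colorings hX hC t)
    (fun t X => by simp [Set.indicator_of_mem hw, Set.indicator_of_notMem hu]; abel)
    (fun t X => by ext x; by_cases hx : x ∈ C <;> simp [hx])
  have hall : #(colorings B E) = Fintype.card F * #{X ∈ colorings B E | X w - X u = 0} := by
    simpa using key univ
  rw [colorings_insert hB, key B, hall]
  ring

theorem Gamma_insert_of_not_reachable (hB : ∀ a ∈ B, -a ∈ B)
    (h : ¬(fromEdgeSet (E : Set (Sym2 V))).Reachable u w) :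
    Gamma V F B (insert s(u, w) E) = #B / Fintype.card F * Gamma V F B E := by
  have hF : (Fintype.card F : ℝ) ≠ 0 := Nat.cast_ne_zero.2 Fintype.card_ne_zero
  have hcard : (#(colorings B (insert s(u, w) E)) : ℝ) =
      #B / Fintype.card F * #(colorings B E) := by
    rw [div_mul_eq_mul_div, eq_div_iff hF]
    exact_mod_cast card_colorings_insert_mul hB h
  rw [Gamma_eq_card_colorings, Gamma_eq_card_colorings, hcard, mul_div_assoc]

end Colorings

section Components

variable {V : Type} [Fintype V] {E : Finset (Sym2 V)} {u w : V}

theorem cComp_empty : cComp V ∅ = Fintype.card V := by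
  rw [cComp, coe_empty, fromEdgeSet_empty, ← Nat.card_eq_fintype_card]
  refine (Nat.card_congr (Equiv.ofBijective _ ⟨fun a b hab => ?_, Quot.mk_surjective⟩)).symm
  exact reachable_bot.1 (ConnectedComponent.exact hab)

theorem cComp_le : cComp V E ≤ Fintype.card V := by
  rw [← Nat.card_eq_fintype_card]
  exact Nat.card_le_card_of_surjective _ Quot.mk_surjective

theorem cComp_insert_of_reachable (h : (fromEdgeSet (E : Set (Sym2 V))).Reachable u w) :
    cComp V (insert s(u, w) E) = cComp V E := by
  rw [cComp, cComp, coe_insert, fromEdgeSet_insert]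
  exact card_connectedComponent_sup_edge_of_reachable h

theorem cComp_insert_add_one (h : ¬(fromEdgeSet (E : Set (Sym2 V))).Reachable u w) :
    cComp V (insert s(u, w) E) + 1 = cComp V E := by
  rw [cComp, cComp, coe_insert, fromEdgeSet_insert]
  exact card_connectedComponent_sup_edge_add_one h

end Components

theorem Gamma_le_pow_and_eq_of_isAcyclic {V F : Type} [Fintype V] [Fintype F] [AddCommGroup F]
    {B : Finset F} (hB : ∀ a ∈ B, -a ∈ B) (E : Finset (Sym2 V)) (hE : ∀ e ∈ E, ¬e.IsDiag) :
    Gamma V F B E ≤ (#B / Fintype.card F : ℝ) ^ (Fintype.card V - cComp V E) ∧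
      ((fromEdgeSet (E : Set (Sym2 V))).IsAcyclic →
        Gamma V F B E = (#B / Fintype.card F : ℝ) ^ (Fintype.card V - cComp V E)) := by
  induction E using Finset.induction_on with
  | empty => simp [Gamma_empty, cComp_empty]
  | insert e E he ih =>
    induction e using Sym2.ind with | h u w => ?_
    have huw : u ≠ w := by simpa using hE _ (mem_insert_self _ _)
    obtain ⟨ihle, iheq⟩ := ih fun e h => hE e (mem_insert_of_mem h)
    rw [coe_insert, fromEdgeSet_insert]
    by_cases hr : (fromEdgeSet (E : Set (Sym2 V))).Reachable u w
    · rw [cComp_insert_of_reachable hr]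
      refine ⟨(Gamma_anti (subset_insert _ _)).trans ihle, fun hac => ?_⟩
      obtain huw' | hadj := (isAcyclic_sup_fromEdgeSet_iff.1 hac).2 hr
      · exact absurd huw' huw
      · exact absurd ((fromEdgeSet_adj _).1 hadj).1 he
    · have hexp : Fintype.card V - cComp V (insert s(u, w) E) =
          Fintype.card V - cComp V E + 1 := by
        have := cComp_insert_add_one hr
        have := cComp_le (E := E)
        omega
      rw [Gamma_insert_of_not_reachable hB hr, hexp, pow_succ']
      exact ⟨by gcongr, fun hac => by rw [iheq (hac.anti le_sup_left)]⟩

/-- `[Γ^{Ā}]_E ≤ ᾱ^{v-c(E)}`, with equality when `(V,E)` is a forest. -/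
theorem gamma_compl_le_pow_and_eq_of_acyclic
    (V : Type) [Fintype V] (F : Type) [Fintype F] [AddCommGroup F]
    (A : Finset F) (hA : ∀ a ∈ A, -a ∈ A)
    (E : Finset (Sym2 V)) (hE : ∀ e ∈ E, ¬ e.IsDiag) :
    Gamma V F Aᶜ E ≤
        ((Aᶜ.card : ℝ) / (Fintype.card F : ℝ)) ^ (Fintype.card V - cComp V E) ∧
      ((SimpleGraph.fromEdgeSet (E : Set (Sym2 V))).IsAcyclic →
        Gamma V F Aᶜ E =
          ((Aᶜ.card : ℝ) / (Fintype.card F : ℝ)) ^ (Fintype.card V - cComp V E)) := by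
  have hAc : ∀ a ∈ Aᶜ, -a ∈ Aᶜ := fun a ha =>
    mem_compl.2 fun h => mem_compl.1 ha (by simpa using hA _ h)
  exact Gamma_le_pow_and_eq_of_isAcyclic hAc E hE
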